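/- For every t ∈ ℂ, the deformed Lie algebra f_t (with bracket [e_1,h']_t = [e_1,h'] + t D(h') as described) is filiform of dimension 13: its lower central series has dimensions 11, 10, …, 1, 0. -/

import Mathlib

open scoped BigOperators

/-- Structure constants of the 13-dimensional filiform Lie algebra `f₁₃`:
`f13SC i j k` is the coefficient of `e_k` in `⁅e_i, e_j⁆` for `i < j`
(and `0` otherwise; the full antisymmetric constants are obtained below). -/
noncomputable def f13SC : ℕ → ℕ → ℕ → ℂ
  | 0, j, k => if 1 ≤ j ∧ j ≤ 11 ∧ k = j + 1 then 1 else 0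
  | 1, 2, 4 => 1
  | 1, 3, 5 => 1
  | 1, 4, 6 => 9/10
  | 1, 4, 8 => -1
  | 1, 5, 7 => 4/5
  | 1, 5, 9 => -2
  | 1, 6, 8 => 5/7
  | 1, 6, 10 => -335/126
  | 1, 6, 12 => 22105/15246
  | 1, 7, 9 => 9/14
  | 1, 7, 11 => -125/42
  | 1, 8, 10 => 7/12
  | 1, 8, 12 => -4421/1452
  | 1, 9, 11 => 8/15
  | 1, 10, 12 => 27/55
  | 2, 3, 6 => 1/10
  | 2, 3, 8 => 1
  | 2, 4, 7 => 1/10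
  | 2, 4, 9 => 1
  | 2, 5, 8 => 3/35
  | 2, 5, 10 => 83/126
  | 2, 5, 12 => -22105/15246
  | 2, 6, 9 => 1/14
  | 2, 6, 11 => 20/63
  | 2, 7, 10 => 5/84
  | 2, 7, 12 => 697/10164
  | 2, 8, 11 => 1/20
  | 2, 9, 12 => 7/165
  | 3, 4, 8 => 1/70
  | 3, 4, 10 => 43/126
  | 3, 4, 12 => 22105/15246
  | 3, 5, 9 => 1/70
  | 3, 5, 11 => 43/126
  | 3, 6, 10 => 1/84
  | 3, 6, 12 => 7589/30492
  | 3, 7, 11 => 1/105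
  | 3, 8, 12 => 1/132
  | 4, 5, 10 => 1/420
  | 4, 5, 12 => 313/3388
  | 4, 6, 11 => 1/420
  | 4, 7, 12 => 3/1540
  | 5, 6, 12 => 1/2310
  | _, _, _ => 0

/-- The full (antisymmetrized) structure constants of `f₁₃`. -/
noncomputable def f13C (i j k : Fin 13) : ℂ :=
  f13SC i j k - f13SC j i k

/-- Coefficient of `e_k` in `D e_j`, where `D` is the derivation of
`⟨e_2, …, e_12⟩` with `D e_2 = e_9`, `D e_3 = e_10`, `D e_4 = e_11`, `D e_5 = e_12`
and `D e_i = 0` for `6 ≤ i ≤ 12`. -/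
noncomputable def f13D : ℕ → ℕ → ℂ
  | 2, 9 => 1
  | 3, 10 => 1
  | 4, 11 => 1
  | 5, 12 => 1
  | _, _ => 0

/-- Structure constants of the deformed algebra `f_t`:
the bracket of `f₁₃` modified by `⁅e_1, e_j⁆_t = ⁅e_1, e_j⁆ + t D(e_j)`. -/
noncomputable def ftC (t : ℂ) (i j k : Fin 13) : ℂ :=
  f13C i j k + t * ((if (i : ℕ) = 1 then f13D j k else 0) -
    (if (j : ℕ) = 1 then f13D i k else 0))

/-- The deformed bracket `[·,·]_t` on `ℂ¹³` (coordinates with respect to `e_0, …, e_12`). -/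
noncomputable def ftBracket (t : ℂ) (x y : Fin 13 → ℂ) : Fin 13 → ℂ :=
  fun k => ∑ i : Fin 13, ∑ j : Fin 13, x i * y j * ftC t i j k

/-- The lower central series of the deformed algebra `f_t`. -/
noncomputable def ftLCS (t : ℂ) : ℕ → Submodule ℂ (Fin 13 → ℂ)
  | 0 => ⊤
  | i + 1 => Submodule.span ℂ {z | ∃ x : Fin 13 → ℂ, ∃ y ∈ ftLCS t i, z = ftBracket t x y}

/-! The structure constants of `f_t` strictly raise the index: `⁅e_a, e_b⁆_t` lies in
`⟨e_k : k > a + b⟩` (the deformation `t D` only changes `⁅e_1, ·⁆` and raises the index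
by 7), while `⁅e_0, e_j⁆_t = e_{j+1}` for `1 ≤ j ≤ 11`. By induction, the `i`-th term of
the lower central series is therefore `⟨e_{i+1}, …, e_12⟩` for `i ≥ 1`, of dimension
`12 - i`. -/

section StructureConstants

variable {K : Type*} [Field K] {n : ℕ}

def structBracket (c : Fin n → Fin n → Fin n → K) (x y : Fin n → K) : Fin n → K :=
  fun k => ∑ a, ∑ b, x a * y b * c a b k

def structLCS (c : Fin n → Fin n → Fin n → K) : ℕ → Submodule K (Fin n → K)
  | 0 => ⊤
  | i + 1 => Submodule.span K {z | ∃ x, ∃ y ∈ structLCS c i, z = structBracket c x y}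

variable (K n) in
def vanishingUpTo (i : ℕ) : Submodule K (Fin n → K) where
  carrier := {f | ∀ k : Fin n, k.val ≤ i → f k = 0}
  add_mem' hf hg k hk := by simp [hf k hk, hg k hk]
  zero_mem' _ _ := rfl
  smul_mem' c f hf k hk := by simp [hf k hk]

lemma mem_vanishingUpTo {i : ℕ} {f : Fin n → K} :
    f ∈ vanishingUpTo K n i ↔ ∀ k : Fin n, k.val ≤ i → f k = 0 :=
  Iff.rfl

lemma vanishingUpTo_eq_span (i : ℕ) : vanishingUpTo K n i =
    Submodule.span K (Set.range fun k : {k : Fin n // i < k.val} => Pi.single k.1 (1 : K)) := by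
  apply le_antisymm
  · intro f hf
    rw [← Finset.univ_sum_single f]
    refine Submodule.sum_mem _ fun k _ => ?_
    by_cases hk : k.val ≤ i
    · simp [hf k hk]
    · rw [← mul_one (f k), ← smul_eq_mul, Pi.single_smul]
      exact Submodule.smul_mem _ _ (Submodule.subset_span ⟨⟨k, by omega⟩, rfl⟩)
  · rw [Submodule.span_le]
    rintro _ ⟨k, rfl⟩
    rw [SetLike.mem_coe, mem_vanishingUpTo]
    intro l hl
    exact Pi.single_eq_of_ne (fun h => by subst h; omega) _

lemma finrank_vanishingUpTo (i : ℕ) : Module.finrank K (vanishingUpTo K n i) = n - (i + 1) := by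
  rw [vanishingUpTo_eq_span, finrank_span_eq_card]
  · simp_rw [← not_le, Fintype.card_subtype_compl, Fintype.card_fin, Fintype.card_subtype,
      ← Nat.lt_succ_iff, Fin.card_filter_val_lt]
    omega
  · exact (Pi.linearIndependent_single_one (Fin n) K).comp _ Subtype.val_injective

variable {c : Fin n → Fin n → Fin n → K}

lemma structBracket_single_one (a b : Fin n) :
    structBracket c (Pi.single a 1) (Pi.single b 1) = c a b := by
  funext k
  simp [structBracket, Pi.single_apply]

lemma structBracket_mem_vanishingUpTo_one
    (hdeg : ∀ a b k : Fin n, k.val ≤ a.val + b.val → c a b k = 0)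
    (halt : ∀ a k, c a a k = 0) (x y : Fin n → K) :
    structBracket c x y ∈ vanishingUpTo K n 1 := by
  refine fun k hk => Finset.sum_eq_zero fun a _ => Finset.sum_eq_zero fun b _ => ?_
  by_cases hab : a.val = 0 ∧ b.val = 0
  · rw [show a = b from Fin.ext (by omega), halt, mul_zero]
  · rw [hdeg a b k (by omega), mul_zero]

lemma structBracket_mem_vanishingUpTo_succ
    (hdeg : ∀ a b k : Fin n, k.val ≤ a.val + b.val → c a b k = 0)
    {i : ℕ} (x : Fin n → K) {y : Fin n → K} (hy : y ∈ vanishingUpTo K n i) :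
    structBracket c x y ∈ vanishingUpTo K n (i + 1) := by
  refine fun k hk => Finset.sum_eq_zero fun a _ => Finset.sum_eq_zero fun b _ => ?_
  by_cases hb : b.val ≤ i
  · rw [hy b hb, mul_zero, zero_mul]
  · rw [hdeg a b k (by omega), mul_zero]

lemma span_structBracket_eq_vanishingUpTo
    (hgen : ∀ a b k : Fin n, a.val = 0 → 1 ≤ b.val →
      c a b k = if k.val = b.val + 1 then 1 else 0)
    {i : ℕ} {M : Submodule K (Fin n → K)} (hlower : vanishingUpTo K n i ≤ M)
    (hupper : ∀ x, ∀ y ∈ M, structBracket c x y ∈ vanishingUpTo K n (i + 1)) :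
    Submodule.span K {z | ∃ x, ∃ y ∈ M, z = structBracket c x y} =
      vanishingUpTo K n (i + 1) := by
  refine le_antisymm (Submodule.span_le.2 ?_) ?_
  · rintro _ ⟨x, y, hy, rfl⟩
    exact hupper x y hy
  rw [vanishingUpTo_eq_span]
  refine Submodule.span_mono ?_
  rintro _ ⟨⟨k, hk⟩, rfl⟩
  let e₀ : Fin n := ⟨0, by omega⟩
  let b : Fin n := ⟨k.val - 1, by omega⟩
  refine ⟨Pi.single e₀ 1, Pi.single b 1, hlower fun l hl => Pi.single_eq_of_ne ?_ _, ?_⟩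
  · rintro rfl; simp [b] at hl; omega
  · rw [structBracket_single_one]
    funext l
    rw [hgen e₀ b l rfl (by simp [b]; omega)]
    simp [Pi.single_apply, Fin.ext_iff, b, Nat.sub_add_cancel (show 1 ≤ k.val by omega)]

theorem structLCS_eq_vanishingUpTo
    (hdeg : ∀ a b k : Fin n, k.val ≤ a.val + b.val → c a b k = 0)
    (halt : ∀ a k, c a a k = 0)
    (hgen : ∀ a b k : Fin n, a.val = 0 → 1 ≤ b.val →
      c a b k = if k.val = b.val + 1 then 1 else 0)
    {i : ℕ} (hi : 1 ≤ i) : structLCS c i = vanishingUpTo K n i := by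
  induction i, hi using Nat.le_induction with
  | base =>
    exact span_structBracket_eq_vanishingUpTo hgen le_top
      fun x y _ => structBracket_mem_vanishingUpTo_one hdeg halt x y
  | succ i _ ih =>
    rw [structLCS, ih]
    exact span_structBracket_eq_vanishingUpTo hgen le_rfl
      fun x _ hy => structBracket_mem_vanishingUpTo_succ hdeg x hy

end StructureConstants

lemma f13SC_eq_zero_of_le {a b k : ℕ} (h : k ≤ a + b) : f13SC a b k = 0 := by
  unfold f13SC
  split <;> first | rfl | omega | exact if_neg (by omega)

lemma f13SC_zero_right (a k : ℕ) : f13SC a 0 k = 0 := by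
  unfold f13SC
  split <;> first | rfl | omega

lemma f13D_eq_zero_of_le {b k : ℕ} (h : k ≤ b + 6) : f13D b k = 0 := by
  unfold f13D
  split <;> first | rfl | omega

lemma ftC_eq_zero_of_le (t : ℂ) (a b k : Fin 13) (h : k.val ≤ a.val + b.val) :
    ftC t a b k = 0 := by
  unfold ftC f13C
  rw [f13SC_eq_zero_of_le h, f13SC_eq_zero_of_le (by omega)]
  have hDb : a.val = 1 → f13D b k = 0 := fun _ => f13D_eq_zero_of_le (by omega)
  have hDa : b.val = 1 → f13D a k = 0 := fun _ => f13D_eq_zero_of_le (by omega)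
  split_ifs <;> simp [*]

lemma ftC_self (t : ℂ) (a k : Fin 13) : ftC t a a k = 0 := by
  simp [ftC, f13C]

lemma ftC_of_val_eq_zero (t : ℂ) (a b k : Fin 13) (ha : a.val = 0) (hb : 1 ≤ b.val) :
    ftC t a b k = if k.val = b.val + 1 then 1 else 0 := by
  have hD : ∀ q, f13D 0 q = 0 := fun _ => rfl
  unfold ftC f13C
  rw [ha, f13SC_zero_right]
  by_cases hk : k.val = b.val + 1
  · have hb11 : b.val ≤ 11 := by omega
    simp [f13SC, hk, hb, hb11, hD]
  · simp [f13SC, hk, hD]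

lemma ftLCS_eq_structLCS (t : ℂ) : ftLCS t = structLCS (ftC t) := by
  funext i
  induction i with
  | zero => rfl
  | succ i ih => rw [ftLCS, structLCS, ih]; rfl

/-- For every `t ∈ ℂ`, the deformed Lie algebra `f_t` is filiform of dimension 13:
its lower central series has dimensions `11, 10, …, 1, 0`. -/
theorem ft_filiform (t : ℂ) :
    ∀ i : ℕ, 1 ≤ i → i ≤ 12 → Module.finrank ℂ (ftLCS t i) = 12 - i := by
  intro i hi _
  rw [ftLCS_eq_structLCS, structLCS_eq_vanishingUpTo (ftC_eq_zero_of_le t) (ftC_self t)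
    (ftC_of_val_eq_zero t) hi, finrank_vanishingUpTo]
  omega
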